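/- In the extended welded braid group WB_n^ext, define the 'sign-reversal' of σ_i to be ρ_iσ_i^{−1}ρ_i. Then the assignment σ_i ↦ ρ_iσ_i^{−1}ρ_i, ρ_i ↦ ρ_i, τ_i ↦ τ_i extends to a well-defined group automorphism of WB_n^ext, and this automorphism is an involution. -/
import Mathlib


/-- Generators of the extended welded braid group on `n` strands (0-based indices):
`sigma i` and `rho i` for `i+1 < n`, `tau i` for `i < n`. -/
inductive EWGen (n : ℕ) : Type
  | sigma (i : ℕ) (h : i + 1 < n) : EWGen n
  | rho (i : ℕ) (h : i + 1 < n) : EWGen n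
  | tau (i : ℕ) (h : i < n) : EWGen n

def Sg (n i : ℕ) (h : i + 1 < n) : FreeGroup (EWGen n) := FreeGroup.of (EWGen.sigma i h)
def Rg (n i : ℕ) (h : i + 1 < n) : FreeGroup (EWGen n) := FreeGroup.of (EWGen.rho i h)
def Tg (n i : ℕ) (h : i < n) : FreeGroup (EWGen n) := FreeGroup.of (EWGen.tau i h)

/-- The defining relations of the extended welded braid group, written as words `lhs * rhs⁻¹`. -/
def ewRels (n : ℕ) : Set (FreeGroup (EWGen n)) :=
  { r |
    (∃ (i j : ℕ) (hi : i + 1 < n) (hj : j + 1 < n), i + 1 < j ∧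
      r = Sg n i hi * Sg n j hj * (Sg n j hj * Sg n i hi)⁻¹) ∨
    (∃ (i : ℕ) (h : i + 2 < n),
      r = Sg n i (by omega) * Sg n (i+1) h * Sg n i (by omega) *
        (Sg n (i+1) h * Sg n i (by omega) * Sg n (i+1) h)⁻¹) ∨
    (∃ (i j : ℕ) (hi : i + 1 < n) (hj : j + 1 < n), i + 1 < j ∧
      r = Rg n i hi * Rg n j hj * (Rg n j hj * Rg n i hi)⁻¹) ∨
    (∃ (i : ℕ) (h : i + 2 < n),
      r = Rg n i (by omega) * Rg n (i+1) h * Rg n i (by omega) *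
        (Rg n (i+1) h * Rg n i (by omega) * Rg n (i+1) h)⁻¹) ∨
    (∃ (i : ℕ) (h : i + 1 < n), r = Rg n i h * Rg n i h) ∨
    (∃ (i j : ℕ) (hi : i + 1 < n) (hj : j + 1 < n), (i + 1 < j ∨ j + 1 < i) ∧
      r = Rg n i hi * Sg n j hj * (Sg n j hj * Rg n i hi)⁻¹) ∨
    (∃ (i : ℕ) (h : i + 2 < n),
      r = Rg n (i+1) h * Rg n i (by omega) * Sg n (i+1) h *
        (Sg n i (by omega) * Rg n (i+1) h * Rg n i (by omega))⁻¹) ∨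
    (∃ (i : ℕ) (h : i + 2 < n),
      r = Sg n (i+1) h * Sg n i (by omega) * Rg n (i+1) h *
        (Rg n i (by omega) * Sg n (i+1) h * Sg n i (by omega))⁻¹) ∨
    (∃ (i j : ℕ) (hi : i < n) (hj : j < n), i ≠ j ∧
      r = Tg n i hi * Tg n j hj * (Tg n j hj * Tg n i hi)⁻¹) ∨
    (∃ (i : ℕ) (h : i < n), r = Tg n i h * Tg n i h) ∨
    (∃ (i j : ℕ) (hi : i + 1 < n) (hj : j < n), (i + 1 < j ∨ j + 1 < i) ∧
      r = Sg n i hi * Tg n j hj * (Tg n j hj * Sg n i hi)⁻¹) ∨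
    (∃ (i j : ℕ) (hi : i + 1 < n) (hj : j < n), (i + 1 < j ∨ j + 1 < i) ∧
      r = Rg n i hi * Tg n j hj * (Tg n j hj * Rg n i hi)⁻¹) ∨
    (∃ (i : ℕ) (h : i + 1 < n),
      r = Tg n i (by omega) * Rg n i h * (Rg n i h * Tg n (i+1) h)⁻¹) ∨
    (∃ (i : ℕ) (h : i + 1 < n),
      r = Tg n i (by omega) * Sg n i h * (Sg n i h * Tg n (i+1) h)⁻¹) ∨
    (∃ (i : ℕ) (h : i + 1 < n),
      r = Tg n (i+1) h * Sg n i h *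
        (Rg n i h * (Sg n i h)⁻¹ * Rg n i h * Tg n i (by omega))⁻¹) }

/-- The extended welded braid group `WB_n^ext`. -/
abbrev EWB (n : ℕ) := PresentedGroup (ewRels n)

def ews (n i : ℕ) (h : i + 1 < n) : EWB n := PresentedGroup.of (EWGen.sigma i h)
def ewr (n i : ℕ) (h : i + 1 < n) : EWB n := PresentedGroup.of (EWGen.rho i h)
def ewt (n i : ℕ) (h : i < n) : EWB n := PresentedGroup.of (EWGen.tau i h)



section SignRevAux

variable {n : ℕ}

private lemma assoc_form {G : Type*} [Group G] {a b c d : G} (h : a * b = c * d) (x : G) :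
    a * (b * x) = c * (d * x) := by rw [← mul_assoc, h, mul_assoc]

private lemma assoc_form3 {G : Type*} [Group G] {a b c d e f : G}
    (h : a * (b * c) = d * (e * f)) (x : G) :
    a * (b * (c * x)) = d * (e * (f * x)) := by
  have := congrArg (· * x) h
  simpa [mul_assoc] using this

private lemma cancel_form {G : Type*} [Group G] {a b : G} (h : a * b = 1) (x : G) :
    a * (b * x) = x := by rw [← mul_assoc, h, one_mul]

private lemma mk_eq_one {r : FreeGroup (EWGen n)} (hr : r ∈ ewRels n) :
    PresentedGroup.mk (ewRels n) r = 1 := by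
  have : (QuotientGroup.mk r : FreeGroup (EWGen n) ⧸ Subgroup.normalClosure (ewRels n)) = 1 :=
    (QuotientGroup.eq_one_iff r).mpr (Subgroup.subset_normalClosure hr)
  exact this

private lemma rel_eq {a b : FreeGroup (EWGen n)} (hr : a * b⁻¹ ∈ ewRels n) :
    PresentedGroup.mk (ewRels n) a = PresentedGroup.mk (ewRels n) b := by
  have h1 := mk_eq_one hr
  rw [map_mul, map_inv] at h1
  exact mul_inv_eq_one.mp h1

private lemma mk_S (i : ℕ) (h : i + 1 < n) :
    PresentedGroup.mk (ewRels n) (Sg n i h) = ews n i h := rfl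

private lemma mk_R (i : ℕ) (h : i + 1 < n) :
    PresentedGroup.mk (ewRels n) (Rg n i h) = ewr n i h := rfl

private lemma mk_T (i : ℕ) (h : i < n) :
    PresentedGroup.mk (ewRels n) (Tg n i h) = ewt n i h := rfl

private lemma ew_rho_braid (i : ℕ) (h : i + 2 < n) :
    ewr n i (by omega) * (ewr n (i+1) h * ewr n i (by omega)) =
      ewr n (i+1) h * (ewr n i (by omega) * ewr n (i+1) h) := by
  have := rel_eq (n := n)
    (a := Rg n i (by omega) * Rg n (i+1) h * Rg n i (by omega))
    (b := Rg n (i+1) h * Rg n i (by omega) * Rg n (i+1) h)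
    (Or.inr <| Or.inr <| Or.inr <| Or.inl ⟨i, h, rfl⟩)
  simpa only [map_mul, mk_R, mul_assoc] using this

private lemma ew_rho_sq (i : ℕ) (h : i + 1 < n) :
    ewr n i h * ewr n i h = 1 := by
  have := mk_eq_one (n := n) (r := Rg n i h * Rg n i h)
    (Or.inr <| Or.inr <| Or.inr <| Or.inr <| Or.inl ⟨i, h, rfl⟩)
  simpa only [map_mul, mk_R] using this

private lemma ew_mixed (i : ℕ) (h : i + 2 < n) :
    ewr n (i+1) h * (ewr n i (by omega) * ews n (i+1) h) =
      ews n i (by omega) * (ewr n (i+1) h * ewr n i (by omega)) := by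
  have := rel_eq (n := n)
    (a := Rg n (i+1) h * Rg n i (by omega) * Sg n (i+1) h)
    (b := Sg n i (by omega) * Rg n (i+1) h * Rg n i (by omega))
    (Or.inr <| Or.inr <| Or.inr <| Or.inr <| Or.inr <| Or.inr <| Or.inl ⟨i, h, rfl⟩)
  simpa only [map_mul, mk_R, mk_S, mul_assoc] using this

private lemma ew_tau_tau (i j : ℕ) (hi : i < n) (hj : j < n) (hij : i ≠ j) :
    ewt n i hi * ewt n j hj = ewt n j hj * ewt n i hi := by
  have := rel_eq (n := n)
    (a := Tg n i hi * Tg n j hj) (b := Tg n j hj * Tg n i hi)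
    (Or.inr <| Or.inr <| Or.inr <| Or.inr <| Or.inr <| Or.inr <| Or.inr <| Or.inr <|
      Or.inl ⟨i, j, hi, hj, hij, rfl⟩)
  simpa only [map_mul, mk_T] using this

private lemma ew_tau_sq (i : ℕ) (h : i < n) :
    ewt n i h * ewt n i h = 1 := by
  have := mk_eq_one (n := n) (r := Tg n i h * Tg n i h)
    (Or.inr <| Or.inr <| Or.inr <| Or.inr <| Or.inr <| Or.inr <| Or.inr <| Or.inr <|
      Or.inr <| Or.inl ⟨i, h, rfl⟩)
  simpa only [map_mul, mk_T] using this

private lemma ew_sigma_tau_far (i j : ℕ) (hi : i + 1 < n) (hj : j < n)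
    (hc : i + 1 < j ∨ j + 1 < i) :
    ews n i hi * ewt n j hj = ewt n j hj * ews n i hi := by
  have := rel_eq (n := n)
    (a := Sg n i hi * Tg n j hj) (b := Tg n j hj * Sg n i hi)
    (Or.inr <| Or.inr <| Or.inr <| Or.inr <| Or.inr <| Or.inr <| Or.inr <| Or.inr <|
      Or.inr <| Or.inr <| Or.inl ⟨i, j, hi, hj, hc, rfl⟩)
  simpa only [map_mul, mk_S, mk_T] using this

private lemma ew_rho_tau_far (i j : ℕ) (hi : i + 1 < n) (hj : j < n)
    (hc : i + 1 < j ∨ j + 1 < i) :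
    ewr n i hi * ewt n j hj = ewt n j hj * ewr n i hi := by
  have := rel_eq (n := n)
    (a := Rg n i hi * Tg n j hj) (b := Tg n j hj * Rg n i hi)
    (Or.inr <| Or.inr <| Or.inr <| Or.inr <| Or.inr <| Or.inr <| Or.inr <| Or.inr <|
      Or.inr <| Or.inr <| Or.inr <| Or.inl ⟨i, j, hi, hj, hc, rfl⟩)
  simpa only [map_mul, mk_R, mk_T] using this

private lemma ew_tau_rho (i : ℕ) (h : i + 1 < n) :
    ewt n i (by omega) * ewr n i h = ewr n i h * ewt n (i+1) h := by
  have := rel_eq (n := n)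
    (a := Tg n i (by omega) * Rg n i h) (b := Rg n i h * Tg n (i+1) h)
    (Or.inr <| Or.inr <| Or.inr <| Or.inr <| Or.inr <| Or.inr <| Or.inr <| Or.inr <|
      Or.inr <| Or.inr <| Or.inr <| Or.inr <| Or.inl ⟨i, h, rfl⟩)
  simpa only [map_mul, mk_R, mk_T] using this

private lemma ew_tau_sigma (i : ℕ) (h : i + 1 < n) :
    ewt n i (by omega) * ews n i h = ews n i h * ewt n (i+1) h := by
  have := rel_eq (n := n)
    (a := Tg n i (by omega) * Sg n i h) (b := Sg n i h * Tg n (i+1) h)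
    (Or.inr <| Or.inr <| Or.inr <| Or.inr <| Or.inr <| Or.inr <| Or.inr <| Or.inr <|
      Or.inr <| Or.inr <| Or.inr <| Or.inr <| Or.inr <| Or.inl ⟨i, h, rfl⟩)
  simpa only [map_mul, mk_S, mk_T] using this

private lemma ew_wen (i : ℕ) (h : i + 1 < n) :
    ewt n (i+1) h * ews n i h =
      ewr n i h * ((ews n i h)⁻¹ * (ewr n i h * ewt n i (by omega))) := by
  have := rel_eq (n := n)
    (a := Tg n (i+1) h * Sg n i h)
    (b := Rg n i h * (Sg n i h)⁻¹ * Rg n i h * Tg n i (by omega))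
    (Or.inr <| Or.inr <| Or.inr <| Or.inr <| Or.inr <| Or.inr <| Or.inr <| Or.inr <|
      Or.inr <| Or.inr <| Or.inr <| Or.inr <| Or.inr <| Or.inr <| ⟨i, h, rfl⟩)
  simpa only [map_mul, map_inv, mk_R, mk_S, mk_T, mul_assoc] using this

private lemma tau_rho' (i : ℕ) (h : i + 1 < n) :
    ewt n (i+1) h * ewr n i h = ewr n i h * ewt n i (by omega) := by
  apply mul_left_cancel (a := ewr n i h)
  rw [← assoc_form (ew_tau_rho i h) (ewr n i h), ew_rho_sq i h, mul_one,
    cancel_form (ew_rho_sq i h)]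

private lemma tau_sigma_inv (i : ℕ) (h : i + 1 < n) :
    ewt n (i+1) h * (ews n i h)⁻¹ = (ews n i h)⁻¹ * ewt n i (by omega) := by
  apply mul_left_cancel (a := ews n i h)
  rw [← assoc_form (ew_tau_sigma i h) (ews n i h)⁻¹, mul_inv_cancel, mul_one,
    cancel_form (mul_inv_cancel (ews n i h))]

private lemma pair_rho (i : ℕ) (h : i + 1 < n) :
    ewt n i (by omega) * (ewt n (i+1) h * ewr n i h) =
      ewr n i h * (ewt n i (by omega) * ewt n (i+1) h) := by
  rw [tau_rho' i h, assoc_form (ew_tau_rho i h), ew_tau_tau (i+1) i h (by omega) (by omega)]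

private lemma pair_sigma (i : ℕ) (h : i + 1 < n) :
    ewt n i (by omega) * (ewt n (i+1) h * ews n i h) =
      ewr n i h * ((ews n i h)⁻¹ * (ewr n i h * (ewt n i (by omega) * ewt n (i+1) h))) := by
  rw [ew_wen i h, assoc_form (ew_tau_rho i h), assoc_form (tau_sigma_inv i h),
    assoc_form (ew_tau_rho i h), ew_tau_tau (i+1) i h (by omega) (by omega)]

private lemma tau_rho_prev (j : ℕ) (h : j + 2 < n) :
    ewt n j (by omega) * ewr n (j+1) h = ewr n (j+1) h * ewt n j (by omega) := by
  have hX : ewr n j (by omega) * (ewr n (j+1) h * (ewr n j (by omega) *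
      (ewr n (j+1) h * ewr n j (by omega)))) = ewr n (j+1) h := by
    rw [assoc_form3 (ew_rho_braid j h), cancel_form (ew_rho_sq (j+1) h),
      ew_rho_sq j (by omega), mul_one]
  conv_lhs => rw [← hX]
  conv_rhs => rw [← hX]
  rw [assoc_form (ew_tau_rho j (by omega)), assoc_form (ew_tau_rho (j+1) h),
    assoc_form (ew_rho_tau_far j (j+2) (by omega) (by omega) (Or.inl (by omega))).symm,
    assoc_form (tau_rho' (j+1) h), tau_rho' j (by omega)]
  simp only [mul_assoc]

private lemma tau_sigma_prev (j : ℕ) (h : j + 2 < n) :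
    ewt n j (by omega) * ews n (j+1) h = ews n (j+1) h * ewt n j (by omega) := by
  have hY : ewr n j (by omega) * (ewr n (j+1) h * (ews n j (by omega) *
      (ewr n (j+1) h * ewr n j (by omega)))) = ews n (j+1) h := by
    conv_lhs => rw [← ew_mixed j h]
    rw [cancel_form (ew_rho_sq (j+1) h), cancel_form (ew_rho_sq j (by omega))]
  conv_lhs => rw [← hY]
  conv_rhs => rw [← hY]
  rw [assoc_form (ew_tau_rho j (by omega)), assoc_form (ew_tau_rho (j+1) h),
    assoc_form (ew_sigma_tau_far j (j+2) (by omega) (by omega) (Or.inl (by omega))).symm,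
    assoc_form (tau_rho' (j+1) h), tau_rho' j (by omega)]
  simp only [mul_assoc]

private lemma comm_tau_rho (j i : ℕ) (hj : j < n) (hi : i + 1 < n)
    (h1 : j ≠ i) (h2 : j ≠ i + 1) :
    ewt n j hj * ewr n i hi = ewr n i hi * ewt n j hj := by
  rcases Nat.lt_trichotomy j i with hlt | rfl | hgt
  · rcases Nat.lt_or_ge (j+1) i with hf | hf
    · exact (ew_rho_tau_far i j hi hj (Or.inr hf)).symm
    · have hji : i = j + 1 := by omega
      subst hji
      exact tau_rho_prev j (by omega)
  · exact absurd rfl h1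
  · exact (ew_rho_tau_far i j hi hj (Or.inl (by omega))).symm

private lemma comm_tau_sigma (j i : ℕ) (hj : j < n) (hi : i + 1 < n)
    (h1 : j ≠ i) (h2 : j ≠ i + 1) :
    ewt n j hj * ews n i hi = ews n i hi * ewt n j hj := by
  rcases Nat.lt_trichotomy j i with hlt | rfl | hgt
  · rcases Nat.lt_or_ge (j+1) i with hf | hf
    · exact (ew_sigma_tau_far i j hi hj (Or.inr hf)).symm
    · have hji : i = j + 1 := by omega
      subst hji
      exact tau_sigma_prev j (by omega)
  · exact absurd rfl h1
  · exact (ew_sigma_tau_far i j hi hj (Or.inl (by omega))).symm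

private def Tpart (n : ℕ) : ℕ → EWB n
  | 0 => 1
  | k+1 => Tpart n k * (if h : k < n then ewt n k h else 1)

private lemma Tpart_succ (k : ℕ) (h : k < n) :
    Tpart n (k+1) = Tpart n k * ewt n k h := by
  rw [Tpart, dif_pos h]

private lemma Tpart_comm_tau (k j : ℕ) (hj : j < n) :
    Tpart n k * ewt n j hj = ewt n j hj * Tpart n k := by
  induction k with
  | zero => rw [Tpart, one_mul, mul_one]
  | succ k ih =>
    by_cases hk : k < n
    · have hcomm : ewt n k hk * ewt n j hj = ewt n j hj * ewt n k hk := by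
        rcases eq_or_ne k j with rfl | hne
        · rfl
        · exact ew_tau_tau k j hk hj hne
      rw [Tpart_succ k hk, mul_assoc, hcomm, ← mul_assoc, ih, mul_assoc]
    · rw [Tpart, dif_neg hk, mul_one, ih]

private lemma Tpart_sq (k : ℕ) : Tpart n k * Tpart n k = 1 := by
  induction k with
  | zero => rw [Tpart, one_mul]
  | succ k ih =>
    by_cases hk : k < n
    · rw [Tpart_succ k hk, mul_assoc, ← mul_assoc (ewt n k hk), ← Tpart_comm_tau k k hk,
        mul_assoc (Tpart n k) (ewt n k hk), ew_tau_sq k hk, mul_one]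
      exact ih
    · rw [Tpart, dif_neg hk, mul_one, ih]

private lemma Tpart_comm_rho_le (i : ℕ) (hi : i + 1 < n) :
    ∀ k, k ≤ i → Tpart n k * ewr n i hi = ewr n i hi * Tpart n k := by
  intro k
  induction k with
  | zero => intro _; rw [Tpart, one_mul, mul_one]
  | succ k ih =>
    intro hk
    have hkn : k < n := by omega
    rw [Tpart_succ k hkn, mul_assoc, comm_tau_rho k i hkn hi (by omega) (by omega),
      ← mul_assoc, ih (by omega), mul_assoc]

private lemma Tpart_comm_sigma_le (i : ℕ) (hi : i + 1 < n) :
    ∀ k, k ≤ i → Tpart n k * ews n i hi = ews n i hi * Tpart n k := by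
  intro k
  induction k with
  | zero => intro _; rw [Tpart, one_mul, mul_one]
  | succ k ih =>
    intro hk
    have hkn : k < n := by omega
    rw [Tpart_succ k hkn, mul_assoc, comm_tau_sigma k i hkn hi (by omega) (by omega),
      ← mul_assoc, ih (by omega), mul_assoc]

private lemma Tpart_rho (i : ℕ) (hi : i + 1 < n) :
    ∀ k, i + 2 ≤ k → Tpart n k * ewr n i hi = ewr n i hi * Tpart n k := by
  intro k hk
  induction k, hk using Nat.le_induction with
  | base =>
    rw [Tpart_succ (i+1) hi, Tpart_succ i (by omega)]
    simp only [mul_assoc]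
    rw [pair_rho i hi, ← mul_assoc, Tpart_comm_rho_le i hi i le_rfl, mul_assoc]
  | succ k hk ih =>
    by_cases hkn : k < n
    · rw [Tpart_succ k hkn, mul_assoc, comm_tau_rho k i hkn hi (by omega) (by omega),
        ← mul_assoc, ih, mul_assoc]
    · rw [Tpart, dif_neg hkn, mul_one, ih]

private lemma Tpart_sigma (i : ℕ) (hi : i + 1 < n) :
    ∀ k, i + 2 ≤ k → Tpart n k * ews n i hi =
      ewr n i hi * ((ews n i hi)⁻¹ * (ewr n i hi * Tpart n k)) := by
  intro k hk
  have hcs : Tpart n i * ews n i hi = ews n i hi * Tpart n i :=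
    Tpart_comm_sigma_le i hi i le_rfl
  have hcr : Tpart n i * ewr n i hi = ewr n i hi * Tpart n i :=
    Tpart_comm_rho_le i hi i le_rfl
  have hcsi : Tpart n i * (ews n i hi)⁻¹ = (ews n i hi)⁻¹ * Tpart n i :=
    (Commute.inv_right hcs : _)
  induction k, hk using Nat.le_induction with
  | base =>
    rw [Tpart_succ (i+1) hi, Tpart_succ i (by omega)]
    simp only [mul_assoc]
    rw [pair_sigma i hi, assoc_form hcr, assoc_form hcsi, assoc_form hcr]
  | succ k hk ih =>
    by_cases hkn : k < n
    · rw [Tpart_succ k hkn, mul_assoc (Tpart n k),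
        comm_tau_sigma k i hkn hi (by omega) (by omega), ← mul_assoc, ih]
      simp only [mul_assoc]
    · rw [Tpart, dif_neg hkn, mul_one, ih]

end SignRevAux

/-- The assignment `σ_i ↦ ρ_iσ_i⁻¹ρ_i`, `ρ_i ↦ ρ_i`, `τ_i ↦ τ_i` extends to a group
automorphism of `WB_n^ext` (the sign-reversal automorphism), and it is an involution. -/
theorem sign_reversal_automorphism (n : ℕ) :
    ∃ Φ : EWB n ≃* EWB n,
      (∀ (i : ℕ) (h : i + 1 < n),
        Φ (ews n i h) = ewr n i h * (ews n i h)⁻¹ * ewr n i h) ∧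
      (∀ (i : ℕ) (h : i + 1 < n), Φ (ewr n i h) = ewr n i h) ∧
      (∀ (i : ℕ) (h : i < n), Φ (ewt n i h) = ewt n i h) ∧
      (∀ x : EWB n, Φ (Φ x) = x) := by
  have hT : Tpart n n * Tpart n n = 1 := Tpart_sq n
  have hTinv : (Tpart n n)⁻¹ = Tpart n n := inv_eq_of_mul_eq_one_right hT
  refine ⟨MulAut.conj (Tpart n n), ?_, ?_, ?_, ?_⟩
  · intro i h
    have hk := Tpart_sigma i h n (by omega)
    simp only [MulAut.conj_apply, hTinv]
    rw [hk]
    simp only [mul_assoc]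
    rw [hT, mul_one]
  · intro i h
    have hk := Tpart_rho i h n (by omega)
    simp only [MulAut.conj_apply, hTinv]
    rw [hk, mul_assoc, hT, mul_one]
  · intro i h
    have hk := Tpart_comm_tau n i h
    simp only [MulAut.conj_apply, hTinv]
    rw [hk, mul_assoc, hT, mul_one]
  · intro x
    simp only [MulAut.conj_apply, hTinv]
    have h2 : Tpart n n * (Tpart n n * x * Tpart n n) * Tpart n n
        = (Tpart n n * Tpart n n) * x * (Tpart n n * Tpart n n) := by group
    rw [h2, hT, one_mul, mul_one]
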